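/- The new subtyping relation <: coincides exactly with BCD subtyping ≤: for all types A, B, A <: B if and only if A ≤ B. -/
import Mathlib


inductive Ty : Type where
  | U : Ty
  | const : ℕ → Ty
  | arrow : Ty → Ty → Ty
  | inter : Ty → Ty → Ty

/-- The part relation A ∈⁺ B. -/
inductive Ty.Part : Ty → Ty → Prop where
  | atomU : Ty.Part .U .U
  | atomC (n : ℕ) : Ty.Part (.const n) (.const n)
  | arrow (A B : Ty) : Ty.Part (.arrow A B) (.arrow A B)
  | interL {A B C : Ty} : Ty.Part A B → Ty.Part A (.inter B C)
  | interR {A B C : Ty} : Ty.Part A C → Ty.Part A (.inter B C)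

/-- Containment A ⊆⁺ B: every part of A is a part of B. -/
def Ty.Contain (A B : Ty) : Prop := ∀ C, Ty.Part C A → Ty.Part C B

/-- Partial domain function. -/
def Ty.dom : Ty → Option Ty
  | .arrow A _ => some A
  | .inter A B => do pure (.inter (← A.dom) (← B.dom))
  | _ => none

/-- Partial codomain function. -/
def Ty.cod : Ty → Option Ty
  | .arrow _ B => some B
  | .inter A B => do pure (.inter (← A.cod) (← B.cod))
  | _ => none

/-- The top predicate: types equivalent to U. -/
inductive Ty.Top : Ty → Prop where
  | u : Ty.Top .U
  | arrow {A B : Ty} : Ty.Top B → Ty.Top (.arrow A B)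
  | inter {A B : Ty} : Ty.Top A → Ty.Top B → Ty.Top (.inter A B)

/-- topInCod(D): some function part of D has a top codomain. -/
def Ty.TopInCod (D : Ty) : Prop := ∃ A B : Ty, Ty.Part (.arrow A B) D ∧ Ty.Top B

/-- The new subtyping relation A <: B. -/
inductive Ty.NSub : Ty → Ty → Prop where
  | reflU : Ty.NSub .U .U
  | reflC (n : ℕ) : Ty.NSub (.const n) (.const n)
  | lbL {A B C : Ty} : Ty.NSub A C → Ty.NSub (.inter A B) C
  | lbR {A B C : Ty} : Ty.NSub B C → Ty.NSub (.inter A B) C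
  | glb {A C D : Ty} : Ty.NSub A C → Ty.NSub A D → Ty.NSub A (.inter C D)
  | arrow {A B C D dB cB : Ty} :
      Ty.Contain B A → B.dom = some dB → B.cod = some cB →
      Ty.NSub C dB → Ty.NSub cB D → ¬ Ty.Top D → ¬ Ty.TopInCod B →
      Ty.NSub A (.arrow C D)
  | utop {A : Ty} : Ty.NSub A .U
  | uarrow {A C D : Ty} : Ty.Top D → Ty.NSub A (.arrow C D)

/-- BCD subtyping A ≤ B. -/
inductive Ty.BSub : Ty → Ty → Prop where
  | refl (A : Ty) : Ty.BSub A A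
  | trans {A B C : Ty} : Ty.BSub A B → Ty.BSub B C → Ty.BSub A C
  | inclL (A B : Ty) : Ty.BSub (.inter A B) A
  | inclR (A B : Ty) : Ty.BSub (.inter A B) B
  | glb {A C D : Ty} : Ty.BSub A C → Ty.BSub A D → Ty.BSub A (.inter C D)
  | arrow {A B C D : Ty} : Ty.BSub C A → Ty.BSub B D → Ty.BSub (.arrow A B) (.arrow C D)
  | distrib (A B C : Ty) : Ty.BSub (.inter (.arrow A B) (.arrow A C)) (.arrow A (.inter B C))
  | utop (A : Ty) : Ty.BSub A .U
  | uarrow (C : Ty) : Ty.BSub .U (.arrow C .U)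

/-- C→D factors A. -/
def Ty.Factors (C D A : Ty) : Prop :=
  ∃ B dB cB : Ty, Ty.Contain B A ∧ B.dom = some dB ∧ B.cod = some cB ∧
    Ty.NSub C dB ∧ Ty.NSub cB D ∧ ¬ Ty.TopInCod B

def Ty.size : Ty → ℕ
  | .U => 0
  | .const _ => 0
  | .arrow A B => 1 + A.size + B.size
  | .inter A B => 1 + A.size + B.size

def Ty.depth : Ty → ℕ
  | .U => 0
  | .const _ => 0
  | .arrow A B => 1 + max A.depth B.depth
  | .inter A B => max A.depth B.depth


-- ===== Auxiliary lemmas =====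

lemma part_top {X B : Ty} (h : Ty.Part X B) (hB : Ty.Top B) : Ty.Top X := by
  induction h with
  | atomU => exact hB
  | atomC n => exact hB
  | arrow P Q => exact hB
  | interL _ ih => cases hB with | inter h1 h2 => exact ih h1
  | interR _ ih => cases hB with | inter h1 h2 => exact ih h2

lemma nsub_top {B : Ty} (h : Ty.Top B) : ∀ A, Ty.NSub A B := by
  induction h with
  | u => intro A; exact .utop
  | arrow h ih => intro A; exact .uarrow h
  | inter h1 h2 ih1 ih2 => intro A; exact .glb (ih1 A) (ih2 A)

lemma dom_inter {A B d : Ty} (h : (Ty.inter A B).dom = some d) :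
    ∃ dA dB, A.dom = some dA ∧ B.dom = some dB ∧ d = .inter dA dB := by
  cases hA : A.dom with
  | none => simp [Ty.dom, hA] at h
  | some dA =>
    cases hB : B.dom with
    | none => simp [Ty.dom, hA, hB] at h
    | some dB =>
      simp [Ty.dom, hA, hB] at h
      exact ⟨dA, dB, rfl, rfl, h.symm⟩

lemma cod_inter {A B d : Ty} (h : (Ty.inter A B).cod = some d) :
    ∃ dA dB, A.cod = some dA ∧ B.cod = some dB ∧ d = .inter dA dB := by
  cases hA : A.cod with
  | none => simp [Ty.cod, hA] at h
  | some dA =>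
    cases hB : B.cod with
    | none => simp [Ty.cod, hA, hB] at h
    | some dB =>
      simp [Ty.cod, hA, hB] at h
      exact ⟨dA, dB, rfl, rfl, h.symm⟩

lemma dom_inter_mk {A B dA dB : Ty} (hA : A.dom = some dA) (hB : B.dom = some dB) :
    (Ty.inter A B).dom = some (.inter dA dB) := by simp [Ty.dom, hA, hB]

lemma cod_inter_mk {A B cA cB : Ty} (hA : A.cod = some cA) (hB : B.cod = some cB) :
    (Ty.inter A B).cod = some (.inter cA cB) := by simp [Ty.cod, hA, hB]

lemma arrow_part_of_dom : ∀ {B d : Ty}, B.dom = some d → ∃ P Q, Ty.Part (.arrow P Q) B := by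
  intro B
  induction B with
  | U => intro d h; simp [Ty.dom] at h
  | const n => intro d h; simp [Ty.dom] at h
  | arrow P Q _ _ => intro d _; exact ⟨P, Q, .arrow P Q⟩
  | inter B1 B2 ih1 ih2 =>
    intro d h
    obtain ⟨d1, d2, h1, h2, rfl⟩ := dom_inter h
    obtain ⟨P, Q, hp⟩ := ih1 h1
    exact ⟨P, Q, .interL hp⟩

lemma top_of_nsub : ∀ {A X : Ty}, Ty.NSub A X → Ty.Top A → Ty.Top X := by
  intro A X h
  induction h with
  | reflU => exact id
  | reflC n => exact id
  | lbL _ ih => intro h; cases h with | inter h1 h2 => exact ih h1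
  | lbR _ ih => intro h; cases h with | inter h1 h2 => exact ih h2
  | glb _ _ ih1 ih2 => intro h; exact .inter (ih1 h) (ih2 h)
  | arrow hcont hdom hcod _ _ _ hnt _ _ =>
    intro hA
    obtain ⟨P, Q, hp⟩ := arrow_part_of_dom hdom
    have hT := part_top (hcont _ hp) hA
    cases hT with
    | arrow hQ => exact absurd ⟨P, Q, hp, hQ⟩ hnt
  | utop => intro _; exact .u
  | uarrow h => intro _; exact .arrow h

lemma inv_inter : ∀ {A B : Ty}, Ty.NSub A B → ∀ {C D : Ty}, B = .inter C D →
    Ty.NSub A C ∧ Ty.NSub A D := by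
  intro A B h
  induction h with
  | reflU => intro C D h; exact Ty.noConfusion h
  | reflC n => intro C D h; exact Ty.noConfusion h
  | lbL _ ih => intro C D heq; exact ⟨.lbL (ih heq).1, .lbL (ih heq).2⟩
  | lbR _ ih => intro C D heq; exact ⟨.lbR (ih heq).1, .lbR (ih heq).2⟩
  | glb h1 h2 _ _ =>
    intro C D heq
    injection heq with e1 e2
    subst e1; subst e2
    exact ⟨h1, h2⟩
  | arrow _ _ _ _ _ _ _ _ _ => intro C D h; exact Ty.noConfusion h
  | utop => intro C D h; exact Ty.noConfusion h
  | uarrow _ => intro C D h; exact Ty.noConfusion h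

lemma nsub_part : ∀ {X B : Ty}, Ty.Part X B → ∀ {A : Ty}, Ty.NSub A B → Ty.NSub A X := by
  intro X B h
  induction h with
  | atomU => intro A h; exact h
  | atomC n => intro A h; exact h
  | arrow P Q => intro A h; exact h
  | interL _ ih => intro A h; exact ih (inv_inter h rfl).1
  | interR _ ih => intro A h; exact ih (inv_inter h rfl).2

lemma nsub_refl : ∀ A : Ty, Ty.NSub A A := by
  intro A
  induction A with
  | U => exact .reflU
  | const n => exact .reflC n
  | inter A B ih1 ih2 => exact .glb (.lbL ih1) (.lbR ih2)
  | arrow A B ih1 ih2 =>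
    by_cases h : Ty.Top B
    · exact .uarrow h
    · refine .arrow (fun X hX => hX) rfl rfl ih1 ih2 h ?_
      rintro ⟨P, Q, hp, hq⟩
      cases hp
      exact h hq

lemma nsub_const_inv : ∀ {B X : Ty}, Ty.NSub B X → ∀ {n : ℕ}, X = .const n →
    Ty.Part (.const n) B := by
  intro B X h
  induction h with
  | reflU => intro n h; exact Ty.noConfusion h
  | reflC m => intro n h; injection h with e; subst e; exact .atomC m
  | lbL _ ih => intro n heq; exact .interL (ih heq)
  | lbR _ ih => intro n heq; exact .interR (ih heq)
  | glb _ _ _ _ => intro n h; exact Ty.noConfusion h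
  | arrow _ _ _ _ _ _ _ _ _ => intro n h; exact Ty.noConfusion h
  | utop => intro n h; exact Ty.noConfusion h
  | uarrow _ => intro n h; exact Ty.noConfusion h

lemma inv_arrow : ∀ {B X : Ty}, Ty.NSub B X → ∀ {P Q : Ty}, X = .arrow P Q → ¬ Ty.Top Q →
    Ty.Factors P Q B := by
  intro B X h
  induction h with
  | reflU => intro P Q h _; exact Ty.noConfusion h
  | reflC n => intro P Q h _; exact Ty.noConfusion h
  | lbL _ ih =>
    intro P Q heq hQ
    obtain ⟨B', dB, cB, hc, hd, hcod, h1, h2, h3⟩ := ih heq hQ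
    exact ⟨B', dB, cB, fun X hX => .interL (hc X hX), hd, hcod, h1, h2, h3⟩
  | lbR _ ih =>
    intro P Q heq hQ
    obtain ⟨B', dB, cB, hc, hd, hcod, h1, h2, h3⟩ := ih heq hQ
    exact ⟨B', dB, cB, fun X hX => .interR (hc X hX), hd, hcod, h1, h2, h3⟩
  | glb _ _ _ _ => intro P Q h _; exact Ty.noConfusion h
  | arrow hc hd hcod h1 h2 hnt hntic _ _ =>
    intro P Q heq hQ
    injection heq with e1 e2
    subst e1; subst e2
    exact ⟨_, _, _, hc, hd, hcod, h1, h2, hntic⟩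
  | utop => intro P Q h _; exact Ty.noConfusion h
  | uarrow hD =>
    intro P Q heq hQ
    injection heq with e1 e2
    subst e2
    exact absurd hD hQ

lemma depth_part : ∀ {X B : Ty}, Ty.Part X B → X.depth ≤ B.depth := by
  intro X B h
  induction h with
  | atomU => exact le_refl _
  | atomC n => exact le_refl _
  | arrow P Q => exact le_refl _
  | interL _ ih => exact le_trans ih (by simp [Ty.depth])
  | interR _ ih => exact le_trans ih (by simp [Ty.depth])

lemma depth_dom_lt : ∀ (B' : Ty) {B dB : Ty}, Ty.Contain B' B → B'.dom = some dB →
    dB.depth < B.depth := by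
  intro B'
  induction B' with
  | U => intro B dB _ hd; simp [Ty.dom] at hd
  | const n => intro B dB _ hd; simp [Ty.dom] at hd
  | arrow P Q _ _ =>
    intro B dB hc hd
    injection hd with hd
    rw [← hd]
    have h1 : (Ty.arrow P Q).depth ≤ B.depth := depth_part (hc _ (.arrow P Q))
    simp [Ty.depth] at h1
    have h2 := le_max_left P.depth Q.depth
    omega
  | inter B1 B2 ih1 ih2 =>
    intro B dB hc hd
    obtain ⟨d1, d2, hd1, hd2, rfl⟩ := dom_inter hd
    have g1 := ih1 (fun X hX => hc X (.interL hX)) hd1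
    have g2 := ih2 (fun X hX => hc X (.interR hX)) hd2
    simp [Ty.depth]; omega

lemma depth_cod_lt : ∀ (B' : Ty) {B cB : Ty}, Ty.Contain B' B → B'.cod = some cB →
    cB.depth < B.depth := by
  intro B'
  induction B' with
  | U => intro B cB _ hd; simp [Ty.cod] at hd
  | const n => intro B cB _ hd; simp [Ty.cod] at hd
  | arrow P Q _ _ =>
    intro B cB hc hd
    injection hd with hd
    rw [← hd]
    have h1 : (Ty.arrow P Q).depth ≤ B.depth := depth_part (hc _ (.arrow P Q))
    simp [Ty.depth] at h1
    have h2 := le_max_right P.depth Q.depth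
    omega
  | inter B1 B2 ih1 ih2 =>
    intro B cB hc hd
    obtain ⟨c1, c2, hc1, hc2, rfl⟩ := cod_inter hd
    have g1 := ih1 (fun X hX => hc X (.interL hX)) hc1
    have g2 := ih2 (fun X hX => hc X (.interR hX)) hc2
    simp [Ty.depth]; omega

lemma factor_mono {A B : Ty} (hAB : Ty.NSub A B) :
    ∀ (B' : Ty) {dB cB : Ty}, Ty.Contain B' B → B'.dom = some dB → B'.cod = some cB →
    ¬ Ty.TopInCod B' →
    ∃ A' dA cA, Ty.Contain A' A ∧ A'.dom = some dA ∧ A'.cod = some cA ∧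
      ¬ Ty.TopInCod A' ∧ Ty.NSub dB dA ∧ Ty.NSub cA cB := by
  intro B'
  induction B' with
  | U => intro dB cB _ hd _ _; simp [Ty.dom] at hd
  | const n => intro dB cB _ hd _ _; simp [Ty.dom] at hd
  | arrow P Q _ _ =>
    intro dB cB hc hd hcod hnt
    injection hd with hd; injection hcod with hcod
    subst hd; subst hcod
    have hQ : ¬ Ty.Top Q := fun h => hnt ⟨P, Q, .arrow P Q, h⟩
    have hpart : Ty.Part (.arrow P Q) B := hc _ (.arrow P Q)
    obtain ⟨A', dA, cA, h1, h2, h3, h4, h5, h6⟩ :=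
      inv_arrow (nsub_part hpart hAB) rfl hQ
    exact ⟨A', dA, cA, h1, h2, h3, h6, h4, h5⟩
  | inter B1 B2 ih1 ih2 =>
    intro dB cB hc hd hcod hnt
    obtain ⟨d1, d2, hd1, hd2, rfl⟩ := dom_inter hd
    obtain ⟨c1, c2, hc1, hc2, rfl⟩ := cod_inter hcod
    obtain ⟨A1, dA1, cA1, g1, g2, g3, g4, g5, g6⟩ :=
      ih1 (fun X hX => hc X (.interL hX)) hd1 hc1
        (fun ⟨P, Q, hp, hq⟩ => hnt ⟨P, Q, .interL hp, hq⟩)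
    obtain ⟨A2, dA2, cA2, k1, k2, k3, k4, k5, k6⟩ :=
      ih2 (fun X hX => hc X (.interR hX)) hd2 hc2
        (fun ⟨P, Q, hp, hq⟩ => hnt ⟨P, Q, .interR hp, hq⟩)
    refine ⟨.inter A1 A2, .inter dA1 dA2, .inter cA1 cA2, ?_,
      dom_inter_mk g2 k2, cod_inter_mk g3 k3, ?_, ?_, ?_⟩
    · intro X hX
      cases hX with
      | interL h => exact g1 X h
      | interR h => exact k1 X h
    · rintro ⟨P, Q, hp, hq⟩
      cases hp with
      | interL h => exact g4 ⟨P, Q, h, hq⟩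
      | interR h => exact k4 ⟨P, Q, h, hq⟩
    · exact .glb (.lbL g5) (.lbR k5)
    · exact .glb (.lbL g6) (.lbR k6)

lemma nsub_trans_aux : ∀ (n : ℕ) (B : Ty), B.depth < n →
    ∀ (A C : Ty), Ty.NSub A B → Ty.NSub B C → Ty.NSub A C := by
  intro n
  induction n with
  | zero => intro B h; exact absurd h (Nat.not_lt_zero _)
  | succ n ih =>
    intro B hB A C h1 h2
    revert h2
    induction C with
    | U => intro _; exact .utop
    | const m => intro h2; exact nsub_part (nsub_const_inv h2 rfl) h1
    | inter C1 C2 ihC1 ihC2 =>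
      intro h2
      obtain ⟨g1, g2⟩ := inv_inter h2 rfl
      exact .glb (ihC1 g1) (ihC2 g2)
    | arrow P Q _ _ =>
      intro h2
      by_cases hQ : Ty.Top Q
      · exact .uarrow hQ
      · obtain ⟨B', dB, cB, f1, f2, f3, f4, f5, f6⟩ := inv_arrow h2 rfl hQ
        obtain ⟨A', dA, cA, g1, g2, g3, g4, g5, g6⟩ := factor_mono h1 B' f1 f2 f3 f6
        have hdB : dB.depth < n := by
          have := depth_dom_lt B' f1 f2; omega
        have hcB : cB.depth < n := by
          have := depth_cod_lt B' f1 f3; omega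
        exact .arrow g1 g2 g3 (ih dB hdB P dA f4 g5) (ih cB hcB cA Q g6 f5) hQ g4

lemma nsub_trans {A B C : Ty} (h1 : Ty.NSub A B) (h2 : Ty.NSub B C) : Ty.NSub A C :=
  nsub_trans_aux (B.depth + 1) B (Nat.lt_succ_self _) A C h1 h2

lemma part_arrow_eq {X A B : Ty} (h : Ty.Part X (.arrow A B)) : X = .arrow A B := by
  cases h; rfl

lemma nsub_arrow_adm {A B C D : Ty} (h1 : Ty.NSub C A) (h2 : Ty.NSub B D) :
    Ty.NSub (.arrow A B) (.arrow C D) := by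
  by_cases hD : Ty.Top D
  · exact .uarrow hD
  · have hB : ¬ Ty.Top B := fun h => hD (top_of_nsub h2 h)
    refine .arrow (fun X hX => hX) rfl rfl h1 h2 hD ?_
    rintro ⟨P, Q, hp, hq⟩
    cases hp
    exact hB hq

lemma nsub_distrib_adm (A B C : Ty) :
    Ty.NSub (.inter (.arrow A B) (.arrow A C)) (.arrow A (.inter B C)) := by
  by_cases hBC : Ty.Top (Ty.inter B C)
  · exact .uarrow hBC
  · by_cases hB : Ty.Top B
    · have hC : ¬ Ty.Top C := fun h => hBC (.inter hB h)
      refine .arrow (B := .arrow A C) ?_ rfl rfl (nsub_refl A)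
        (.glb (nsub_top hB C) (nsub_refl C)) hBC ?_
      · intro X hX
        rw [part_arrow_eq hX]
        exact .interR (.arrow A C)
      · rintro ⟨P, Q, hp, hq⟩
        have := part_arrow_eq hp
        injection this with e1 e2
        subst e2
        exact hC hq
    · by_cases hC : Ty.Top C
      · refine .arrow (B := .arrow A B) ?_ rfl rfl (nsub_refl A)
          (.glb (nsub_refl B) (nsub_top hC B)) hBC ?_
        · intro X hX
          rw [part_arrow_eq hX]
          exact .interL (.arrow A B)
        · rintro ⟨P, Q, hp, hq⟩
          have := part_arrow_eq hp
          injection this with e1 e2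
          subst e2
          exact hB hq
      · refine .arrow (B := .inter (.arrow A B) (.arrow A C)) (fun X hX => hX)
          rfl rfl (.glb (nsub_refl A) (nsub_refl A)) (nsub_refl _) hBC ?_
        rintro ⟨P, Q, hp, hq⟩
        cases hp with
        | interL h =>
          have := part_arrow_eq h
          injection this with e1 e2
          subst e2; exact hB hq
        | interR h =>
          have := part_arrow_eq h
          injection this with e1 e2
          subst e2; exact hC hq

lemma bsub_part {X A : Ty} (h : Ty.Part X A) : Ty.BSub A X := by
  induction h with
  | atomU => exact .refl _
  | atomC n => exact .refl _
  | arrow P Q => exact .refl _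
  | interL _ ih => exact .trans (.inclL _ _) ih
  | interR _ ih => exact .trans (.inclR _ _) ih

lemma bsub_contain : ∀ (B : Ty) {A : Ty}, Ty.Contain B A → Ty.BSub A B := by
  intro B
  induction B with
  | U => intro A _; exact .utop A
  | const n => intro A h; exact bsub_part (h _ (.atomC n))
  | arrow P Q _ _ => intro A h; exact bsub_part (h _ (.arrow P Q))
  | inter B1 B2 ih1 ih2 =>
    intro A h
    exact .glb (ih1 (fun X hX => h X (.interL hX))) (ih2 (fun X hX => h X (.interR hX)))

lemma bsub_dom_cod : ∀ (B : Ty) {d c : Ty}, B.dom = some d → B.cod = some c →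
    Ty.BSub B (.arrow d c) := by
  intro B
  induction B with
  | U => intro d c hd _; simp [Ty.dom] at hd
  | const n => intro d c hd _; simp [Ty.dom] at hd
  | arrow P Q _ _ =>
    intro d c hd hc
    injection hd with hd; injection hc with hc
    subst hd; subst hc
    exact .refl _
  | inter B1 B2 ih1 ih2 =>
    intro d c hd hc
    obtain ⟨d1, d2, hd1, hd2, rfl⟩ := dom_inter hd
    obtain ⟨c1, c2, hc1, hc2, rfl⟩ := cod_inter hc
    have s1 : Ty.BSub (Ty.inter B1 B2) (.inter (.arrow d1 c1) (.arrow d2 c2)) :=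
      .glb (.trans (.inclL _ _) (ih1 hd1 hc1)) (.trans (.inclR _ _) (ih2 hd2 hc2))
    have s2 : Ty.BSub (Ty.inter (.arrow d1 c1) (.arrow d2 c2))
        (.inter (.arrow (.inter d1 d2) c1) (.arrow (.inter d1 d2) c2)) :=
      .glb (.trans (.inclL _ _) (.arrow (.inclL _ _) (.refl _)))
        (.trans (.inclR _ _) (.arrow (.inclR _ _) (.refl _)))
    exact .trans s1 (.trans s2 (.distrib _ _ _))

lemma bsub_top {D : Ty} (h : Ty.Top D) : Ty.BSub .U D := by
  induction h with
  | u => exact .refl _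
  | arrow _ ih => exact .trans (.uarrow _) (.arrow (.refl _) ih)
  | inter _ _ ih1 ih2 => exact .glb ih1 ih2

lemma nsub_to_bsub : ∀ {A B : Ty}, Ty.NSub A B → Ty.BSub A B := by
  intro A B h
  induction h with
  | reflU => exact .refl _
  | reflC n => exact .refl _
  | lbL _ ih => exact .trans (.inclL _ _) ih
  | lbR _ ih => exact .trans (.inclR _ _) ih
  | glb _ _ ih1 ih2 => exact .glb ih1 ih2
  | arrow hc hd hcod _ _ _ _ ih1 ih2 =>
    exact .trans (bsub_contain _ hc) (.trans (bsub_dom_cod _ hd hcod) (.arrow ih1 ih2))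
  | utop => exact .utop _
  | uarrow hD =>
    exact .trans (.utop _) (.trans (.uarrow _) (.arrow (.refl _) (bsub_top hD)))

lemma bsub_to_nsub : ∀ {A B : Ty}, Ty.BSub A B → Ty.NSub A B := by
  intro A B h
  induction h with
  | refl A => exact nsub_refl A
  | trans _ _ ih1 ih2 => exact nsub_trans ih1 ih2
  | inclL A B => exact .lbL (nsub_refl A)
  | inclR A B => exact .lbR (nsub_refl B)
  | glb _ _ ih1 ih2 => exact .glb ih1 ih2
  | arrow _ _ ih1 ih2 => exact nsub_arrow_adm ih1 ih2
  | distrib A B C => exact nsub_distrib_adm A B C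
  | utop A => exact .utop
  | uarrow C => exact .uarrow .u

theorem nsub_iff_bsub (A B : Ty) : Ty.NSub A B ↔ Ty.BSub A B :=
  ⟨nsub_to_bsub, bsub_to_nsub⟩
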